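/- arXiv:2304.02433 — 3 statements merged into one kernel-verified Lean document; each statement's English description precedes it below -/
import Mathlib

section
/- Suppose s : [0,∞) → ℝ is absolutely continuous with s(0) = 0, and for some η > 0 the inequality s(t)·s'(t) ≤ −η·|s(t)| holds for almost every t ≥ 0. Then s(t) = 0 for all t ≥ 0. -/
open MeasureTheory

lemma no_reaching_phase_aux (s s' : ℝ → ℝ) (η : ℝ) (hη : 0 < η)
    (hderiv : ∀ t, HasDerivAt s (s' t) t)
    (hs0 : s 0 = 0)
    (hineq : ∀ᵐ t ∂(volume.restrict (Set.Ici (0 : ℝ))), s t * s' t ≤ -η * |s t|) :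
    ∀ t, 0 ≤ t → s t ≤ 0 := by
  intro t₀ ht₀
  by_contra hpos
  push_neg at hpos
  -- the bad set where the inequality fails
  set A : Set ℝ := {t | ¬ (s t * s' t ≤ -η * |s t|)} with hA
  have hA0 : volume.restrict (Set.Ici (0 : ℝ)) A = 0 := by
    rw [← MeasureTheory.ae_iff] at *
    exact hineq
  set N : Set ℝ := A ∩ Set.Ici (0 : ℝ) with hN
  have hN0 : volume N = 0 := by
    rw [hN, ← Measure.restrict_apply' measurableSet_Ici]
    exact hA0
  -- image of the bad set is null (Luzin N property of differentiable maps)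
  have himg : volume (s '' N) = 0 := by
    exact addHaar_image_eq_zero_of_differentiableOn_of_addHaar_eq_zero volume
      (fun x _ => (hderiv x).differentiableAt.differentiableWithinAt) hN0
  -- pick a regular value y ∈ (0, s t₀) avoiding s '' N
  have hy : (Set.Ioo (0 : ℝ) (s t₀) \ (s '' N)).Nonempty := by
    by_contra h
    rw [Set.not_nonempty_iff_eq_empty, Set.diff_eq_empty] at h
    have := measure_mono_null h himg
    rw [Real.volume_Ioo] at this
    simp only [ENNReal.ofReal_eq_zero, sub_nonpos] at this
    linarith
  obtain ⟨y, ⟨hy0, hyt⟩, hyN⟩ := hy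
  -- last point in [0, t₀] where s ≤ y
  set B : Set ℝ := {x ∈ Set.Icc 0 t₀ | s x ≤ y} with hB
  have hBne : B.Nonempty := ⟨0, ⟨le_refl 0, ht₀⟩, by rw [hs0]; exact hy0.le⟩
  have hBbdd : BddAbove B := BddAbove.mono (fun x hx => hx.1.2) (bddAbove_Iic)
  have hBclosed : IsClosed B := by
    have : B = Set.Icc 0 t₀ ∩ s ⁻¹' Set.Iic y := by
      ext x; simp [hB, Set.mem_setOf_eq, and_comm]
    rw [this]
    have hscont : Continuous s := by
      apply continuous_iff_continuousAt.mpr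
      exact fun x => (hderiv x).continuousAt
    exact isClosed_Icc.inter (IsClosed.preimage hscont isClosed_Iic)
  set c : ℝ := sSup B with hc
  have hcB : c ∈ B := hBclosed.csSup_mem hBne hBbdd
  have hc0 : 0 ≤ c := hcB.1.1
  have hct : c ≤ t₀ := hcB.1.2
  have hscy : s c ≤ y := hcB.2
  have hclt : c < t₀ := lt_of_le_of_ne hct (fun h => by rw [h] at hscy; linarith)
  -- beyond c, s stays above y
  have hgt : ∀ x, c < x → x ≤ t₀ → y < s x := by
    intro x hcx hxt
    by_contra h
    push_neg at h
    exact absurd (le_csSup hBbdd ⟨⟨hc0.trans hcx.le, hxt⟩, h⟩) (not_le.mpr hcx)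
  -- s c = y by continuity from the right
  have hsc : s c = y := by
    refine le_antisymm hscy ?_
    have hcont : Filter.Tendsto s (nhdsWithin c (Set.Ioi c)) (nhds (s c)) :=
      ((hderiv c).continuousAt.continuousWithinAt)
    refine ge_of_tendsto hcont ?_
    filter_upwards [Ioo_mem_nhdsGT_of_mem (Set.mem_Ico.mpr ⟨le_refl c, hclt⟩)] with x hx
    exact (hgt x hx.1 hx.2.le).le
  -- the derivative at c is nonnegative (s increases through y from the right)
  have hd0 : 0 ≤ s' c := by
    have hslope : Filter.Tendsto (slope s c) (nhdsWithin c {c}ᶜ) (nhds (s' c)) :=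
      hasDerivAt_iff_tendsto_slope.mp (hderiv c)
    have hslope' : Filter.Tendsto (slope s c) (nhdsWithin c (Set.Ioi c)) (nhds (s' c)) :=
      hslope.mono_left (nhdsWithin_mono c (fun x hx => ne_of_gt hx))
    refine ge_of_tendsto hslope' ?_
    filter_upwards [Ioo_mem_nhdsGT_of_mem (Set.mem_Ico.mpr ⟨le_refl c, hclt⟩)] with x hx
    have h1 : s c < s x := by rw [hsc]; exact hgt x hx.1 hx.2.le
    have h2 : 0 < x - c := by linarith [hx.1]
    rw [slope_def_field]
    exact div_nonneg (by linarith) h2.le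
  -- but c is a good point, so s' c ≤ -η < 0 : contradiction
  have hcN : c ∉ N := fun h => hyN ⟨c, h, hsc⟩
  have hcA : c ∉ A := fun h => hcN ⟨h, hc0⟩
  have hcP : s c * s' c ≤ -η * |s c| := not_not.mp hcA
  rw [hsc, abs_of_pos hy0] at hcP
  nlinarith

theorem no_reaching_phase (s s' : ℝ → ℝ) (η : ℝ) (hη : 0 < η)
    (hderiv : ∀ t, HasDerivAt s (s' t) t)
    (hs0 : s 0 = 0)
    (hineq : ∀ᵐ t ∂(volume.restrict (Set.Ici (0 : ℝ))), s t * s' t ≤ -η * |s t|) :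
    ∀ t, 0 ≤ t → s t = 0 := by
  intro t ht
  have h1 := no_reaching_phase_aux s s' η hη hderiv hs0 hineq t ht
  have h2 := no_reaching_phase_aux (fun x => -s x) (fun x => -s' x) η hη
    (fun x => (hderiv x).neg) (by simp [hs0])
    (by filter_upwards [hineq] with x hx; simpa using hx) t ht
  simp only [neg_nonpos] at h2
  linarith
end

section
/- Define the sequence of exponents by α_{n+1} = 1, α_n = α with α ∈ (0,1), and α_{i−1} = (α_i·α_{i+1})/(2·α_{i+1} − α_i) for i = n, n−1, …, 2. Then all denominators 2·α_{i+1} − α_i are strictly positive and every α_i lies in (0, 1). -/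
/-- Exponent recursion of the FOITSM, indexed in reverse: `a j = α_{n+1-j}`,
so `a 0 = α_{n+1} = 1`, `a 1 = α_n = α`, and
`α_{i-1} = α_i·α_{i+1}/(2·α_{i+1} − α_i)` becomes
`a (j+1) = a j * a (j-1) / (2 * a (j-1) - a j)`. -/
theorem foitsm_exponents_well_defined (n : ℕ) (hn : 2 ≤ n) (α : ℝ)
    (hα : α ∈ Set.Ioo (0 : ℝ) 1) (a : ℕ → ℝ)
    (h0 : a 0 = 1) (h1 : a 1 = α)
    (hrec : ∀ j, 1 ≤ j → j ≤ n - 1 →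
      a (j + 1) = a j * a (j - 1) / (2 * a (j - 1) - a j)) :
    (∀ j, 1 ≤ j → j ≤ n - 1 → 0 < 2 * a (j - 1) - a j) ∧
    (∀ j, 1 ≤ j → j ≤ n → a j ∈ Set.Ioo (0 : ℝ) 1) := by
  obtain ⟨hα0, hα1⟩ := hα
  have key : ∀ j, 1 ≤ j → j ≤ n → 0 < a j ∧ a j < a (j - 1) ∧ a j < 1 := by
    intro j
    induction j with
    | zero => intro h; omega
    | succ k ih =>
      intro _ hk
      cases k with
      | zero =>
        simp only [Nat.zero_add, Nat.sub_self]
        refine ⟨by rw [h1]; exact hα0, by rw [h0, h1]; exact hα1, by rw [h1]; exact hα1⟩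
      | succ m =>
        set k := m + 1
        obtain ⟨hpos, hlt, hlt1⟩ := ih (by omega) (by omega)
        have hpos' : 0 < a (k - 1) := lt_trans hpos hlt
        have hd : 0 < 2 * a (k - 1) - a k := by linarith
        have hr := hrec k (by omega) (by omega)
        have hsimp : k + 1 - 1 = k := rfl
        rw [hsimp]
        have h1' : 0 < a (k + 1) := by
          rw [hr]; exact div_pos (mul_pos hpos hpos') hd
        have h2' : a (k + 1) < a k := by
          rw [hr, div_lt_iff₀ hd]
          nlinarith
        exact ⟨h1', h2', lt_trans h2' hlt1⟩
  constructor
  · intro j hj1 hj2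
    obtain ⟨hpos, hlt, _⟩ := key j hj1 (by omega)
    linarith [lt_trans hpos hlt]
  · intro j hj1 hj2
    obtain ⟨hpos, _, hlt1⟩ := key j hj1 hj2
    exact ⟨hpos, hlt1⟩
end

section
/- Let V(t) = (1/2)s(t)² + (1/2)d̃(t)² + (1/2)k̃(t)² where s, d̃, k̃ : [0,∞) → ℝ are differentiable and satisfy ṡ = d̃ − κs, ḋ̃ = ḋ − λd̃ − k̂·sgn(d̃) − s with |ḋ| ≤ k, and k̇̃ = −(−τk̂ + μ|s|) with k̂ = k − k̃, k̂(t) ≥ 0. If κ > μ/2, λ > 1/2, and τ > μ + 1, then V̇(t) ≤ −γ·V(t) + (1/2)τk², where γ = min{κ − μ/2, λ − 1/2, (τ − μ − 1)/2} > 0. -/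
/-!
Differentiating `V = s²/2 + d̃²/2 + k̃²/2` along the closed loop, the signum term `-k̂ |d̃|`
absorbs all of the disturbance `d̃ ḋ ≤ k |d̃|` except `k̃ |d̃|`, because `k - k̂ = k̃`. Young's
inequality then bounds the remaining cross terms `k̃ |d̃|`, `-μ k̃ |s|` and `τ k k̃` by squares,
which leaves `V̇ ≤ -(κ - μ/2) s² - (λ - 1/2) d̃² - (τ - μ - 1)/2 k̃² + τ k²/2`; each of these
coefficients is at least `γ`, and `V ≥ 0`.
-/

theorem HasDerivAt.sq_div_two {f : ℝ → ℝ} {f' x : ℝ} (hf : HasDerivAt f f' x) :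
    HasDerivAt (fun u => f u ^ 2 / 2) (f x * f') x :=
  ((hf.fun_pow 2).div_const 2).congr_deriv (by push_cast; ring)

theorem Real.mul_sign_self (r : ℝ) : r * Real.sign r = |r| := by
  rcases lt_trichotomy r 0 with h | rfl | h
  · rw [Real.sign_of_neg h, abs_of_neg h, mul_neg_one]
  · simp
  · rw [Real.sign_of_pos h, abs_of_pos h, mul_one]

theorem mul_le_abs_mul_of_abs_le {a b k : ℝ} (h : |b| ≤ k) : a * b ≤ |a| * k :=
  calc a * b ≤ |a * b| := le_abs_self _
    _ = |a| * |b| := abs_mul a b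
    _ ≤ |a| * k := mul_le_mul_of_nonneg_left h (abs_nonneg a)

theorem closedLoop_lyapunov_rate_le {s e kt kh dd κ lam τ μ k : ℝ} (hμ : 0 ≤ μ) (hτ : 0 ≤ τ)
    (hdd : |dd| ≤ k) (hkh : kh = k - kt) :
    s * (e - κ * s) + e * (dd - lam * e - kh * Real.sign e - s) + kt * (-(-τ * kh + μ * |s|)) ≤
      -((κ - μ / 2) * s ^ 2 + (lam - 1 / 2) * e ^ 2 + (τ - μ - 1) / 2 * kt ^ 2) +
        1 / 2 * τ * k ^ 2 := by
  have hsign : kh * (e * Real.sign e) = kh * |e| := by rw [Real.mul_sign_self]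
  have hdist : e * dd ≤ |e| * k := mul_le_abs_mul_of_abs_le hdd
  have young_e : 2 * kt * |e| ≤ kt ^ 2 + e ^ 2 := by
    simpa only [sq_abs] using two_mul_le_add_sq kt |e|
  have young_s : 2 * (-kt) * |s| ≤ kt ^ 2 + s ^ 2 := by
    simpa only [neg_sq, sq_abs] using two_mul_le_add_sq (-kt) |s|
  have young_k : 2 * k * kt ≤ k ^ 2 + kt ^ 2 := two_mul_le_add_sq k kt
  subst hkh
  linarith [mul_le_mul_of_nonneg_left young_s hμ, mul_le_mul_of_nonneg_left young_k hτ]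

theorem neg_weighted_sum_sq_le_neg_mul {a b c γ x y z : ℝ} (hγ : 0 ≤ γ)
    (ha : γ ≤ a) (hb : γ ≤ b) (hc : γ ≤ c) :
    -(a * x ^ 2 + b * y ^ 2 + c * z ^ 2) ≤ -γ * (x ^ 2 / 2 + y ^ 2 / 2 + z ^ 2 / 2) := by
  linarith [mul_le_mul_of_nonneg_right ha (sq_nonneg x),
    mul_le_mul_of_nonneg_right hb (sq_nonneg y), mul_le_mul_of_nonneg_right hc (sq_nonneg z),
    mul_nonneg hγ (sq_nonneg x), mul_nonneg hγ (sq_nonneg y), mul_nonneg hγ (sq_nonneg z)]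

theorem lyapunov_derivative_estimate_general
    (s dtilde ktilde khat d' : ℝ → ℝ) (κ lam τ μ k : ℝ)
    (hμpos : 0 < μ)
    (hd' : ∀ t, |d' t| ≤ k)
    (hs : ∀ t, HasDerivAt s (dtilde t - κ * s t) t)
    (hdtilde : ∀ t, HasDerivAt dtilde
      (d' t - lam * dtilde t - khat t * Real.sign (dtilde t) - s t) t)
    (hktilde : ∀ t, HasDerivAt ktilde (-(-τ * khat t + μ * |s t|)) t)
    (hkhat : ∀ t, khat t = k - ktilde t)
    (hκ : μ / 2 < κ) (hlam : 1 / 2 < lam) (hτ : μ + 1 < τ) :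
    0 < min (κ - μ / 2) (min (lam - 1 / 2) ((τ - μ - 1) / 2)) ∧
    ∀ t, deriv (fun u => s u ^ 2 / 2 + dtilde u ^ 2 / 2 + ktilde u ^ 2 / 2) t ≤
      -(min (κ - μ / 2) (min (lam - 1 / 2) ((τ - μ - 1) / 2))) *
        (s t ^ 2 / 2 + dtilde t ^ 2 / 2 + ktilde t ^ 2 / 2) + (1 / 2) * τ * k ^ 2 := by
  set γ := min (κ - μ / 2) (min (lam - 1 / 2) ((τ - μ - 1) / 2))
  have hγ : 0 < γ := lt_min (by linarith) (lt_min (by linarith) (by linarith))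
  refine ⟨hγ, fun t => ?_⟩
  have hV := (((hs t).sq_div_two).fun_add (hdtilde t).sq_div_two).fun_add (hktilde t).sq_div_two
  rw [hV.deriv]
  calc _ ≤ _ := closedLoop_lyapunov_rate_le hμpos.le (by linarith) (hd' t) (hkhat t)
    _ ≤ _ := add_le_add_left (neg_weighted_sum_sq_le_neg_mul hγ.le (min_le_left _ _)
        ((min_le_right _ _).trans (min_le_left _ _))
        ((min_le_right _ _).trans (min_le_right _ _))) _

theorem lyapunov_derivative_estimate
    (s dtilde ktilde khat d d' : ℝ → ℝ) (κ lam τ μ k : ℝ)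
    (hκpos : 0 < κ) (hlampos : 0 < lam) (hτpos : 0 < τ) (hμpos : 0 < μ)
    (hk : 0 ≤ k)
    (hd : ∀ t, HasDerivAt d (d' t) t)
    (hd' : ∀ t, |d' t| ≤ k)
    (hs : ∀ t, HasDerivAt s (dtilde t - κ * s t) t)
    (hdtilde : ∀ t, HasDerivAt dtilde
      (d' t - lam * dtilde t - khat t * Real.sign (dtilde t) - s t) t)
    (hktilde : ∀ t, HasDerivAt ktilde (-(-τ * khat t + μ * |s t|)) t)
    (hkhat : ∀ t, khat t = k - ktilde t)
    (hkhatpos : ∀ t, 0 ≤ khat t)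
    (hκ : μ / 2 < κ) (hlam : 1 / 2 < lam) (hτ : μ + 1 < τ) :
    0 < min (κ - μ / 2) (min (lam - 1 / 2) ((τ - μ - 1) / 2)) ∧
    ∀ t, deriv (fun u => s u ^ 2 / 2 + dtilde u ^ 2 / 2 + ktilde u ^ 2 / 2) t ≤
      -(min (κ - μ / 2) (min (lam - 1 / 2) ((τ - μ - 1) / 2))) *
        (s t ^ 2 / 2 + dtilde t ^ 2 / 2 + ktilde t ^ 2 / 2) + (1 / 2) * τ * k ^ 2 :=
  lyapunov_derivative_estimate_general s dtilde ktilde khat d' κ lam τ μ k hμpos hd' hs hdtilde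
    hktilde hkhat hκ hlam hτ
end
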